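/- arXiv:2011.14801 — 2 statements merged into one kernel-verified Lean document; each statement's English description precedes it below -/
import Mathlib

section
/- Let G be a finite simple graph, 𝒱 = (𝒱_1,…,𝒱_p) a partition of V(G), k ≥ 1, and U ⊆ V(G) such that G − U is a cluster graph with connected components C_1,…,C_r; write comp(v) = j if v ∈ V(G)∖U lies in C_j. Then the following are equivalent: (a) there exists a selective set V* ⊆ V(G) such that the subgraph of G induced by V* is properly k-colorable; (b) there exist a set X ⊆ U containing at most one vertex of each part of 𝒱, a proper k-coloring φ' of the subgraph of G induced by X, and functions s : S → V(G)∖U and c : S → [k], where S ⊆ [p] is the set of indices of parts not hit by X, such that: (i) s(ℓ) ∈ 𝒱_ℓ for every ℓ ∈ S; (ii) for every ℓ ∈ S, no neighbor of s(ℓ) in X receives color c(ℓ) under φ'; and (iii) the map ℓ ↦ (c(ℓ), comp(s(ℓ))) is injective on S. -/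
/-!
From a colourable selective set `V*`, take `X = V* ∩ U` and, for every part missed by `X`, its
representative in `V*` together with that vertex's colour. Two such representatives in the same
cluster are adjacent, hence differently coloured, which gives the injectivity (iii).

Conversely, `X` together with the vertices `s ℓ` is selective, and colouring each `s ℓ` by `c ℓ`
extends `φ'` properly: conflicts with `X` are excluded by (ii), and two adjacent vertices `s ℓ`,
`s ℓ'` lie in the same clique, so (iii) forces `c ℓ ≠ c ℓ'`.
-/

open Finset Function

section

variable {ι V α β : Type*}

def IsProperOn (G : SimpleGraph V) (X : Finset V) (ψ : V → α) : Prop :=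
  ∀ a ∈ X, ∀ b ∈ X, G.Adj a b → ψ a ≠ ψ b

variable {G : SimpleGraph V} {ψ : V → α}

theorem IsProperOn.mono {X Y : Finset V} (h : IsProperOn G Y ψ) (hXY : X ⊆ Y) :
    IsProperOn G X ψ :=
  fun a ha b hb => h a (hXY ha) b (hXY hb)

theorem IsProperOn.eq_of_prod_eq {Y : Finset V} {comp : V → β} (hψ : IsProperOn G Y ψ)
    {v w : V} (hv : v ∈ Y) (hw : w ∈ Y) (hcomp : comp v = comp w → v = w ∨ G.Adj v w)
    (h : (ψ v, comp v) = (ψ w, comp w)) : v = w :=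
  (hcomp (Prod.ext_iff.mp h).2).resolve_right fun hadj => hψ v hv w hw hadj (Prod.ext_iff.mp h).1

theorem isProperOn_union_image_extend [DecidableEq V] {X : Finset V} {T : Finset ι} {s : ι → V}
    {φ : V → α} {c : ι → α} (hsinj : Set.InjOn s T) (hsX : ∀ ℓ ∈ T, s ℓ ∉ X)
    (hφ : IsProperOn G X φ) (hXT : ∀ ℓ ∈ T, ∀ w ∈ X, G.Adj (s ℓ) w → φ w ≠ c ℓ)
    (hTT : ∀ ℓ ∈ T, ∀ ℓ' ∈ T, G.Adj (s ℓ) (s ℓ') → c ℓ ≠ c ℓ') :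
    IsProperOn G (X ∪ T.image s) (extend (fun ℓ : T => s ℓ) (fun ℓ => c ℓ) φ) := by
  have hinj : Injective (fun ℓ : T => s ℓ) := fun ℓ ℓ' h => Subtype.ext (hsinj ℓ.2 ℓ'.2 h)
  have hT : ∀ ℓ ∈ T, extend (fun ℓ : T => s ℓ) (fun ℓ => c ℓ) φ (s ℓ) = c ℓ :=
    fun ℓ hℓ => hinj.extend_apply _ φ ⟨ℓ, hℓ⟩
  have hX : ∀ v ∈ X, extend (fun ℓ : T => s ℓ) (fun ℓ => c ℓ) φ v = φ v := by
    refine fun v hv => extend_apply' _ _ _ ?_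
    rintro ⟨ℓ, rfl⟩
    exact hsX ℓ ℓ.2 hv
  intro a ha b hb hab
  simp only [mem_union, mem_image] at ha hb
  rcases ha with ha | ⟨ℓ, hℓ, rfl⟩ <;> rcases hb with hb | ⟨ℓ', hℓ', rfl⟩
  · rw [hX a ha, hX b hb]; exact hφ a ha b hb hab
  · rw [hX a ha, hT ℓ' hℓ']; exact hXT ℓ' hℓ' a ha hab.symm
  · rw [hT ℓ hℓ, hX b hb]; exact (hXT ℓ hℓ b hb hab).symm
  · rw [hT ℓ hℓ, hT ℓ' hℓ']; exact hTT ℓ hℓ ℓ' hℓ' hab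

variable {𝒱 : ι → Finset V}

theorem eq_of_mem_of_pairwise_disjoint (hdisj : Pairwise (Disjoint on 𝒱)) {v : V} {ℓ ℓ' : ι}
    (h : v ∈ 𝒱 ℓ) (h' : v ∈ 𝒱 ℓ') : ℓ = ℓ' :=
  Set.PairwiseDisjoint.elim_finset (hdisj.set_pairwise Set.univ) trivial trivial v h h'

theorem image_inter_eq_ite [DecidableEq ι] [DecidableEq V] (hdisj : Pairwise (Disjoint on 𝒱))
    {T : Finset ι} {s : ι → V} (hs : ∀ ℓ ∈ T, s ℓ ∈ 𝒱 ℓ) (ℓ : ι) :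
    T.image s ∩ 𝒱 ℓ = if ℓ ∈ T then {s ℓ} else ∅ := by
  ext v
  simp only [mem_inter, mem_image]
  split_ifs with hℓ
  · constructor
    · rintro ⟨⟨ℓ', hℓ', rfl⟩, hv⟩
      rw [eq_of_mem_of_pairwise_disjoint hdisj (hs ℓ' hℓ') hv, mem_singleton]
    · rw [mem_singleton]
      rintro rfl
      exact ⟨⟨ℓ, hℓ, rfl⟩, hs ℓ hℓ⟩
  · simp only [notMem_empty, iff_false, not_and]
    rintro ⟨ℓ', hℓ', rfl⟩ hv
    exact hℓ (eq_of_mem_of_pairwise_disjoint hdisj (hs ℓ' hℓ') hv ▸ hℓ')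

theorem card_union_image_inter_eq_one [Fintype ι] [DecidableEq ι] [DecidableEq V]
    (hdisj : Pairwise (Disjoint on 𝒱)) {X : Finset V} (hX : ∀ ℓ, #(X ∩ 𝒱 ℓ) ≤ 1) {s : ι → V}
    (hs : ∀ ℓ, X ∩ 𝒱 ℓ = ∅ → s ℓ ∈ 𝒱 ℓ) (ℓ : ι) :
    #((X ∪ ({ℓ | X ∩ 𝒱 ℓ = ∅} : Finset ι).image s) ∩ 𝒱 ℓ) = 1 := by
  rw [union_inter_distrib_right, image_inter_eq_ite hdisj fun ℓ hℓ => hs ℓ (mem_filter.mp hℓ).2]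
  by_cases hℓ : X ∩ 𝒱 ℓ = ∅
  · simp [hℓ]
  · simp only [mem_filter, mem_univ, true_and, hℓ, if_false, union_empty]
    exact le_antisymm (hX ℓ) (nonempty_iff_ne_empty.mpr hℓ).card_pos

end

theorem selective_coloring_cluster_characterization_general
    {V : Type*} [DecidableEq V] (G : SimpleGraph V)
    (p : ℕ) (𝒱 : Fin p → Finset V)
    (hdisj : ∀ ℓ ℓ' : Fin p, ℓ ≠ ℓ' → Disjoint (𝒱 ℓ) (𝒱 ℓ'))
    (k : ℕ)
    (U : Finset V) (r : ℕ) (comp : V → Fin r)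
    (hcluster : ∀ v w : V, v ∉ U → w ∉ U →
      (comp v = comp w ↔ (v = w ∨ G.Adj v w))) :
    (∃ Vstar : Finset V, (∀ ℓ : Fin p, (Vstar ∩ 𝒱 ℓ).card = 1) ∧
      ∃ ψ : V → Fin k, ∀ a ∈ Vstar, ∀ b ∈ Vstar, G.Adj a b → ψ a ≠ ψ b) ↔
    (∃ X : Finset V, X ⊆ U ∧ (∀ ℓ : Fin p, (X ∩ 𝒱 ℓ).card ≤ 1) ∧
      ∃ φ' : V → Fin k, (∀ a ∈ X, ∀ b ∈ X, G.Adj a b → φ' a ≠ φ' b) ∧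
      ∃ (s : Fin p → V) (c : Fin p → Fin k),
        (∀ ℓ : Fin p, X ∩ 𝒱 ℓ = ∅ → s ℓ ∉ U ∧ s ℓ ∈ 𝒱 ℓ) ∧
        (∀ ℓ : Fin p, X ∩ 𝒱 ℓ = ∅ → ∀ w ∈ X, G.Adj (s ℓ) w → φ' w ≠ c ℓ) ∧
        (∀ ℓ ℓ' : Fin p, X ∩ 𝒱 ℓ = ∅ → X ∩ 𝒱 ℓ' = ∅ →
          (c ℓ, comp (s ℓ)) = (c ℓ', comp (s ℓ')) → ℓ = ℓ')) := by
  have hpart : Pairwise (Disjoint on 𝒱) := fun ℓ ℓ' => hdisj ℓ ℓ'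
  constructor
  · rintro ⟨Vstar, hsel, ψ, hψ⟩
    choose t ht using fun ℓ => card_eq_one.mp (hsel ℓ)
    have htV ℓ : t ℓ ∈ Vstar ∧ t ℓ ∈ 𝒱 ℓ := mem_inter.mp (ht ℓ ▸ mem_singleton_self _)
    have htU ℓ (hℓ : Vstar ∩ U ∩ 𝒱 ℓ = ∅) : t ℓ ∉ U := fun htU =>
      notMem_empty _ (hℓ ▸ mem_inter.mpr ⟨mem_inter.mpr ⟨(htV ℓ).1, htU⟩, (htV ℓ).2⟩)
    refine ⟨Vstar ∩ U, inter_subset_right,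
      fun ℓ => (card_le_card (inter_subset_inter_right inter_subset_left)).trans (hsel ℓ).le,
      ψ, IsProperOn.mono hψ inter_subset_left, t, ψ ∘ t, fun ℓ hℓ => ⟨htU ℓ hℓ, (htV ℓ).2⟩,
      fun ℓ _ w hw hadj => hψ w (mem_inter.mp hw).1 (t ℓ) (htV ℓ).1 hadj.symm,
      fun ℓ ℓ' hℓ hℓ' h => eq_of_mem_of_pairwise_disjoint hpart (htV ℓ).2 ?_⟩
    have heq := IsProperOn.eq_of_prod_eq hψ (htV ℓ).1 (htV ℓ').1
      (hcluster _ _ (htU ℓ hℓ) (htU ℓ' hℓ')).mp h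
    exact heq ▸ (htV ℓ').2
  · rintro ⟨X, hXU, hX1, φ', hφ, s, c, hs, hXc, hinj⟩
    have hmiss {ℓ} (hℓ : ℓ ∈ ({ℓ | X ∩ 𝒱 ℓ = ∅} : Finset (Fin p))) : X ∩ 𝒱 ℓ = ∅ :=
      (mem_filter.mp hℓ).2
    refine ⟨_, card_union_image_inter_eq_one hpart hX1 fun ℓ hℓ => (hs ℓ hℓ).2, _,
      isProperOn_union_image_extend (c := c) (fun ℓ hℓ ℓ' hℓ' h => ?_)
        (fun ℓ hℓ hsX => (hs ℓ (hmiss hℓ)).1 (hXU hsX)) hφ (fun ℓ hℓ => hXc ℓ (hmiss hℓ))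
        (fun ℓ hℓ ℓ' hℓ' hadj hc => ?_)⟩
    · exact eq_of_mem_of_pairwise_disjoint hpart (hs ℓ (hmiss hℓ)).2 (h ▸ (hs ℓ' (hmiss hℓ')).2)
    · have hcomp := (hcluster _ _ (hs ℓ (hmiss hℓ)).1 (hs ℓ' (hmiss hℓ')).1).mpr (Or.inr hadj)
      obtain rfl := hinj ℓ ℓ' (hmiss hℓ) (hmiss hℓ') (Prod.ext hc hcomp)
      exact G.irrefl hadj

/-- Let `G` be a finite simple graph, `𝒱 = (𝒱_1, …, 𝒱_p)` a partition of
`V(G)`, `k ≥ 1`, and `U ⊆ V(G)` such that `G - U` is a cluster graph whose connected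
components are labelled by `comp : V → Fin r` (so, for `v, w ∉ U`, `comp v = comp w` iff
`v = w` or `v` and `w` are adjacent).  Then there exists a selective set `V* ⊆ V(G)`
whose induced subgraph is properly `k`-colorable if and only if there exist a set
`X ⊆ U` containing at most one vertex of each part of `𝒱`, a proper `k`-coloring `φ'` of
the subgraph induced by `X`, and functions `s : S → V(G) ∖ U` and `c : S → [k]`, where
`S` is the set of indices of parts not hit by `X`, such that (i) `s ℓ ∈ 𝒱_ℓ` for every
`ℓ ∈ S`, (ii) no neighbor of `s ℓ` in `X` receives color `c ℓ` under `φ'`, and (iii)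
`ℓ ↦ (c ℓ, comp (s ℓ))` is injective on `S`. -/
theorem selective_coloring_cluster_characterization
    {V : Type*} [Fintype V] [DecidableEq V] (G : SimpleGraph V)
    (p : ℕ) (𝒱 : Fin p → Finset V)
    (hdisj : ∀ ℓ ℓ' : Fin p, ℓ ≠ ℓ' → Disjoint (𝒱 ℓ) (𝒱 ℓ'))
    (hcover : ∀ v : V, ∃ ℓ, v ∈ 𝒱 ℓ)
    (k : ℕ) (hk : 1 ≤ k)
    (U : Finset V) (r : ℕ) (comp : V → Fin r)
    (hcluster : ∀ v w : V, v ∉ U → w ∉ U →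
      (comp v = comp w ↔ (v = w ∨ G.Adj v w))) :
    (∃ Vstar : Finset V, (∀ ℓ : Fin p, (Vstar ∩ 𝒱 ℓ).card = 1) ∧
      ∃ ψ : V → Fin k, ∀ a ∈ Vstar, ∀ b ∈ Vstar, G.Adj a b → ψ a ≠ ψ b) ↔
    (∃ X : Finset V, X ⊆ U ∧ (∀ ℓ : Fin p, (X ∩ 𝒱 ℓ).card ≤ 1) ∧
      ∃ φ' : V → Fin k, (∀ a ∈ X, ∀ b ∈ X, G.Adj a b → φ' a ≠ φ' b) ∧
      ∃ (s : Fin p → V) (c : Fin p → Fin k),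
        (∀ ℓ : Fin p, X ∩ 𝒱 ℓ = ∅ → s ℓ ∉ U ∧ s ℓ ∈ 𝒱 ℓ) ∧
        (∀ ℓ : Fin p, X ∩ 𝒱 ℓ = ∅ → ∀ w ∈ X, G.Adj (s ℓ) w → φ' w ≠ c ℓ) ∧
        (∀ ℓ ℓ' : Fin p, X ∩ 𝒱 ℓ = ∅ → X ∩ 𝒱 ℓ' = ∅ →
          (c ℓ, comp (s ℓ)) = (c ℓ', comp (s ℓ')) → ℓ = ℓ')) :=
  selective_coloring_cluster_characterization_general G p 𝒱 hdisj k U r comp hcluster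
end

section
/- Let G and 𝒱 be the graph and partition produced by the composition construction (described in the context) from graphs H_1,…,H_t on vertex set [n] and an integer k ≥ 1. Then there exists a selective set X ⊆ V(G) such that the subgraph of G induced by X is properly k-colorable if and only if some graph H_j, j ∈ [t], admits a proper 3-coloring. -/
open Classical
noncomputable section

/-! ## The composition construction

Vertices of the composed graph `G` built from graphs `H 0, …, H (t-1)` on vertex set
`Fin n` and an integer `k ≥ 1`:

* `mkA n t k v u h i` is the gadget vertex `v_i(u)` of `G_v` (for `u ≠ v`), where
  `i : Fin 4` with `i ∈ {0, 1, 2}` encoding colors `1, 2, 3` and `i = 3` encoding `e`;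
* `mkQ n t k v q idx` is the `idx`-th vertex of the `q`-th clique of `Q(v)`, where
  `q : Fin 4` encodes `Q_{1,2}(v), Q_{1,3}(v), Q_{2,3}(v), Q_e(v)` (each clique has
  `k - 1` vertices);
* `mkY n t k j` is the vertex `y_j` of the independent set `Y`. -/
abbrev CompV (n t k : ℕ) : Type :=
  (({p : Fin n × Fin n // p.1 ≠ p.2} × Fin 4) ⊕ (Fin n × Fin 4 × Fin (k - 1))) ⊕ Fin t

def mkA (n t k : ℕ) (v u : Fin n) (h : v ≠ u) (i : Fin 4) : CompV n t k :=
  Sum.inl (Sum.inl (⟨(v, u), h⟩, i))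

def mkQ (n t k : ℕ) (v : Fin n) (q : Fin 4) (idx : Fin (k - 1)) : CompV n t k :=
  Sum.inl (Sum.inr (v, q, idx))

def mkY (n t k : ℕ) (j : Fin t) : CompV n t k := Sum.inr j

/-- Color index `i : Fin 4` belongs to clique index `q : Fin 4`, i.e. `A_i(v)` is
completely joined to the clique `Q_q(v)`:  `q = 0` is `Q_{1,2}`, `q = 1` is `Q_{1,3}`,
`q = 2` is `Q_{2,3}` and `q = 3` is `Q_e` (joined to `A_e(v)`, encoded by `i = 3`). -/
def inCliqueIdx (i q : Fin 4) : Prop :=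
  (q = 0 ∧ (i = 0 ∨ i = 1)) ∨ (q = 1 ∧ (i = 0 ∨ i = 2)) ∨
    (q = 2 ∧ (i = 1 ∨ i = 2)) ∨ (q = 3 ∧ i = 3)

/-- Base (one-directional) edge relation of the composed graph; it is symmetrized by
`SimpleGraph.fromRel` below.  The cases are: complete tripartite joins between
`A_1(v), A_2(v), A_3(v)` and the cross-gadget edges `v_i(u)u_i(v)` for `uv ∈ E(H_j)`;
the joins between `A_i(v)` and the cliques `Q_{i,ℓ}(v)` (and `A_e(v)` with `Q_e(v)`);
the four cliques of each `Q(v)`; edges from each `y_j` to all of `Q(G)`; and the edges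
from `y_j` to `v_e(u)` when `uv ∈ E(H_j)` and to `v_1(u), v_2(u), v_3(u)` otherwise. -/
def baseRel (n t k : ℕ) (H : Fin t → SimpleGraph (Fin n)) :
    CompV n t k → CompV n t k → Prop
  | Sum.inl (Sum.inl (⟨(v, u), _⟩, i)), Sum.inl (Sum.inl (⟨(v', u'), _⟩, i')) =>
      (v = v' ∧ i ≠ i' ∧ i ≠ 3 ∧ i' ≠ 3) ∨
        (i = i' ∧ i ≠ 3 ∧ v' = u ∧ u' = v ∧ ∃ j, (H j).Adj u v)
  | Sum.inl (Sum.inl (⟨(v, _), _⟩, i)), Sum.inl (Sum.inr (v', q, _)) =>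
      v = v' ∧ inCliqueIdx i q
  | Sum.inl (Sum.inr (v, q, _)), Sum.inl (Sum.inr (v', q', _)) => v = v' ∧ q = q'
  | Sum.inr _, Sum.inl (Sum.inr _) => True
  | Sum.inr j, Sum.inl (Sum.inl (⟨(v, u), _⟩, i)) =>
      ((H j).Adj v u ∧ i = 3) ∨ (¬ (H j).Adj v u ∧ i ≠ 3)
  | _, _ => False

/-- The graph `G` produced by the composition construction. -/
def compGraph (n t k : ℕ) (H : Fin t → SimpleGraph (Fin n)) : SimpleGraph (CompV n t k) :=
  SimpleGraph.fromRel (baseRel n t k H)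

/-- The set `Q(G) = ⋃_{v} Q(v)` of all clique vertices. -/
def QSet (n t k : ℕ) : Set (CompV n t k) :=
  {x | ∃ v q idx, x = mkQ n t k v q idx}

/-- The part `Y = {y_1, …, y_t}` of the partition `𝒱`. -/
def YPart (n t k : ℕ) : Finset (CompV n t k) :=
  Finset.univ.image (mkY n t k)

/-- The part `{v_1(u), v_2(u), v_3(u), v_e(u)}` of the partition `𝒱`. -/
def APart (n t k : ℕ) (v : Fin n) (u : {u : Fin n // v ≠ u}) : Finset (CompV n t k) :=
  Finset.univ.image (fun i : Fin 4 => mkA n t k v u.1 u.2 i)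

/-- The singleton parts `{x}`, `x ∈ Q(v)`, of the partition `𝒱`. -/
def QSingles (n t k : ℕ) (v : Fin n) : Finset (Finset (CompV n t k)) :=
  Finset.univ.image (fun p : Fin 4 × Fin (k - 1) => {mkQ n t k v p.1 p.2})

/-- The family `parts(G_v)` of parts contributed by the vertex gadget `G_v`. -/
def partsOf (n t k : ℕ) (v : Fin n) : Finset (Finset (CompV n t k)) :=
  (Finset.univ.image (fun u : {u : Fin n // v ≠ u} => APart n t k v u)) ∪ QSingles n t k v

/-- The partition `𝒱` of `V(G)`: the part `Y`, the parts `{v_1(u), v_2(u), v_3(u), v_e(u)}`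
and the singleton parts `{x}` for `x ∈ Q(G)`. -/
def parts (n t k : ℕ) : Finset (Finset (CompV n t k)) :=
  insert (YPart n t k) (Finset.univ.biUnion (partsOf n t k))

/-- A set of vertices is *selective* if it contains exactly one vertex of each part of
`𝒱` (the parts of `𝒱` cover all of `V(G)`, so it automatically contains no other
vertices). -/
def Selective (n t k : ℕ) (X : Set (CompV n t k)) : Prop :=
  ∀ P ∈ parts n t k, ∃! x, x ∈ X ∧ x ∈ P

/-- The vertex set of the gadget `G_v`. -/
def gadgetVerts (n t k : ℕ) (v : Fin n) : Finset (CompV n t k) :=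
  (Finset.univ.image
      (fun p : {u : Fin n // v ≠ u} × Fin 4 => mkA n t k v p.1.1 p.1.2 p.2)) ∪
    (Finset.univ.image (fun p : Fin 4 × Fin (k - 1) => mkQ n t k v p.1 p.2))

/-! A proper `k`-colouring `ψ` of a selective set `X` forces every clique `Q_q(v)` into `X`, with
`k - 1` distinct colours; each selected vertex of an `A`-part, and the selected `y_j`, is joined to
all of some such clique, so all of them receive the one remaining colour and are pairwise
non-adjacent. Non-adjacency to `y_j` forces the selected `v_i(u)` to have `i ∈ {1,2,3}` exactly when
`uv ∈ E(H_j)`; the complete tripartite joins inside `G_v` make `i` depend only on `v`, and the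
edges `v_i(u)u_i(v)` make it differ at the two ends of an edge of `H_j`: a `3`-colouring of `H_j`.
Conversely a `3`-colouring `φ` of `H_j` selects `y_j`, `v_{φ(v)}(u)` for `uv ∈ E(H_j)` and `v_e(u)`
otherwise, and the colouring that numbers each clique `1, …, k - 1` and gives colour `0` to
everything else is proper on that set. -/

theorem eq_of_notMem_range_of_card_le_succ {α β : Type*} [Fintype α] [Fintype β]
    {f : β → α} (hf : Function.Injective f) (hcard : Fintype.card α ≤ Fintype.card β + 1)
    {a b : α} (ha : a ∉ Set.range f) (hb : b ∉ Set.range f) : a = b := by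
  by_contra hab
  have hb' : b ∉ Finset.univ.image f := by simpa using hb
  have ha' : a ∉ insert b (Finset.univ.image f) := by simpa [hab] using ha
  have := Finset.card_le_univ (insert a (insert b (Finset.univ.image f)))
  rw [Finset.card_insert_of_notMem ha', Finset.card_insert_of_notMem hb',
    Finset.card_image_of_injective _ hf, Finset.card_univ] at this
  omega

theorem existsUnique_mem_and_mem_image_univ_iff {α β : Type*} [Fintype β] [DecidableEq α]
    {f : β → α} (hf : Function.Injective f) {X : Set α} :
    (∃! x, x ∈ X ∧ x ∈ Finset.univ.image f) ↔ ∃! b, f b ∈ X := by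
  constructor
  · rintro ⟨x, ⟨hx, hxf⟩, huniq⟩
    obtain ⟨b, -, rfl⟩ := Finset.mem_image.1 hxf
    exact ⟨b, hx, fun b' hb' => hf (huniq _ ⟨hb', Finset.mem_image_of_mem _ (Finset.mem_univ _)⟩)⟩
  · rintro ⟨b, hb, huniq⟩
    refine ⟨f b, ⟨hb, Finset.mem_image_of_mem _ (Finset.mem_univ _)⟩, ?_⟩
    rintro x ⟨hx, hxf⟩
    obtain ⟨b', -, rfl⟩ := Finset.mem_image.1 hxf
    rw [huniq b' hx]

theorem SimpleGraph.exists_coloring_of_dart_labels {V α : Type*} [Nonempty α]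
    (G : SimpleGraph V) (ℓ : V → V → α)
    (hcons : ∀ v u u', G.Adj v u → G.Adj v u' → ℓ v u = ℓ v u')
    (hsep : ∀ v u, G.Adj v u → ℓ v u ≠ ℓ u v) :
    ∃ φ : V → α, ∀ a b, G.Adj a b → φ a ≠ φ b := by
  obtain ⟨φ, hφ⟩ : ∃ φ : V → α, ∀ v u, G.Adj v u → φ v = ℓ v u :=
    ⟨fun v => if h : ∃ u, G.Adj v u then ℓ v h.choose else Classical.arbitrary α,
      fun v u hvu => by
        dsimp only
        rw [dif_pos ⟨u, hvu⟩]
        exact hcons _ _ _ (Exists.choose_spec _) hvu⟩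
  exact ⟨φ, fun a b hab => by rw [hφ a b hab, hφ b a hab.symm]; exact hsep a b hab⟩

theorem exists_inCliqueIdx (i : Fin 4) : ∃ q, inCliqueIdx i q := by
  revert i; unfold inCliqueIdx; decide

section Construction

variable {n t k : ℕ} {H : Fin t → SimpleGraph (Fin n)}

theorem mkY_injective : Function.Injective (mkY n t k) := fun _ _ h => Sum.inr_injective h

theorem mkA_injective (v u : Fin n) (h : v ≠ u) : Function.Injective (mkA n t k v u h) :=
  fun _ _ e => by simpa [mkA] using e

theorem mem_parts_iff {P : Finset (CompV n t k)} :
    P ∈ parts n t k ↔ P = YPart n t k ∨ (∃ v u, P = APart n t k v u) ∨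
      ∃ v q c, P = {mkQ n t k v q c} := by
  simp only [parts, partsOf, QSingles, Finset.mem_insert, Finset.mem_biUnion, Finset.mem_union,
    Finset.mem_image, Finset.mem_univ, true_and, Prod.exists]
  grind

theorem selective_iff {X : Set (CompV n t k)} :
    Selective n t k X ↔ (∃! j, mkY n t k j ∈ X) ∧
      (∀ v u (h : v ≠ u), ∃! i, mkA n t k v u h i ∈ X) ∧ ∀ v q c, mkQ n t k v q c ∈ X := by
  have hY := existsUnique_mem_and_mem_image_univ_iff (X := X) (mkY_injective (n := n) (k := k))
  have hA : ∀ v u h, (∃! x, x ∈ X ∧ x ∈ APart n t k v ⟨u, h⟩) ↔ ∃! i, mkA n t k v u h i ∈ X :=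
    fun v u h => existsUnique_mem_and_mem_image_univ_iff (mkA_injective v u h)
  have hQ : ∀ x : CompV n t k, (∃! y, y ∈ X ∧ y ∈ ({x} : Finset _)) ↔ x ∈ X := fun x => by
    simp only [Finset.mem_singleton]
    exact ⟨fun ⟨_, ⟨hy, rfl⟩, _⟩ => hy, fun hx => ⟨x, ⟨hx, rfl⟩, fun _ hy => hy.2⟩⟩
  simp only [Selective, mem_parts_iff]
  constructor
  · intro hsel
    exact ⟨hY.1 (hsel _ (Or.inl rfl)),
      fun v u h => (hA v u h).1 (hsel _ (Or.inr (Or.inl ⟨v, ⟨u, h⟩, rfl⟩))),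
      fun v q c => (hQ _).1 (hsel _ (Or.inr (Or.inr ⟨v, q, c, rfl⟩)))⟩
  · rintro ⟨hYX, hAX, hQX⟩ P (rfl | ⟨v, ⟨u, h⟩, rfl⟩ | ⟨v, q, c, rfl⟩)
    · exact hY.2 hYX
    · exact (hA v u h).2 (hAX v u h)
    · exact (hQ _).2 (hQX v q c)

theorem compGraph_adj_mkQ_mkQ {v : Fin n} {q : Fin 4} {c c' : Fin (k - 1)} (hc : c ≠ c') :
    (compGraph n t k H).Adj (mkQ n t k v q c) (mkQ n t k v q c') :=
  (SimpleGraph.fromRel_adj _ _ _).2 ⟨by simp [mkQ, hc], Or.inl ⟨rfl, rfl⟩⟩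

theorem compGraph_adj_mkY_mkQ (j : Fin t) (v : Fin n) (q : Fin 4) (c : Fin (k - 1)) :
    (compGraph n t k H).Adj (mkY n t k j) (mkQ n t k v q c) :=
  (SimpleGraph.fromRel_adj _ _ _).2 ⟨by simp [mkY, mkQ], Or.inl trivial⟩

theorem compGraph_adj_mkA_mkQ {v u : Fin n} {h : v ≠ u} {i q : Fin 4} (hiq : inCliqueIdx i q)
    (c : Fin (k - 1)) : (compGraph n t k H).Adj (mkA n t k v u h i) (mkQ n t k v q c) :=
  (SimpleGraph.fromRel_adj _ _ _).2 ⟨by simp [mkA, mkQ], Or.inl ⟨rfl, hiq⟩⟩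

theorem compGraph_adj_mkY_mkA {j : Fin t} {v u : Fin n} {h : v ≠ u} {i : Fin 4}
    (hvu : (H j).Adj v u) (hi : i = 3) :
    (compGraph n t k H).Adj (mkY n t k j) (mkA n t k v u h i) :=
  (SimpleGraph.fromRel_adj _ _ _).2 ⟨by simp [mkY, mkA], Or.inl (Or.inl ⟨hvu, hi⟩)⟩

theorem compGraph_adj_mkA_mkA_of_ne {v u u' : Fin n} {h : v ≠ u} {h' : v ≠ u'} {i i' : Fin 4}
    (hii' : i ≠ i') (hi : i ≠ 3) (hi' : i' ≠ 3) :
    (compGraph n t k H).Adj (mkA n t k v u h i) (mkA n t k v u' h' i') :=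
  (SimpleGraph.fromRel_adj _ _ _).2 ⟨by simp [mkA, hii'], Or.inl (Or.inl ⟨rfl, hii', hi, hi'⟩)⟩

theorem compGraph_adj_mkA_mkA_swap {j : Fin t} {v u : Fin n} {hvu : v ≠ u} {huv : u ≠ v}
    {i : Fin 4} (hadj : (H j).Adj u v) (hi : i ≠ 3) :
    (compGraph n t k H).Adj (mkA n t k v u hvu i) (mkA n t k u v huv i) :=
  (SimpleGraph.fromRel_adj _ _ _).2
    ⟨by simp [mkA, hvu], Or.inl (Or.inr ⟨rfl, hi, rfl, rfl, j, hadj⟩)⟩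

section Forward

variable {X : Set (CompV n t k)} {ψ : CompV n t k → Fin k}

theorem color_eq_of_forall_adj_mkQ
    (hψ : ∀ a ∈ X, ∀ b ∈ X, (compGraph n t k H).Adj a b → ψ a ≠ ψ b) (hk : 1 ≤ k)
    {v : Fin n} {q : Fin 4} (hQ : ∀ c, mkQ n t k v q c ∈ X) {a b : CompV n t k}
    (ha : a ∈ X) (hb : b ∈ X)
    (haQ : ∀ c, (compGraph n t k H).Adj a (mkQ n t k v q c))
    (hbQ : ∀ c, (compGraph n t k H).Adj b (mkQ n t k v q c)) : ψ a = ψ b := by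
  refine eq_of_notMem_range_of_card_le_succ (f := fun c => ψ (mkQ n t k v q c))
    (fun c c' hcc' => ?_) (by simp; omega) ?_ ?_
  · by_contra hne
    exact hψ _ (hQ c) _ (hQ c') (compGraph_adj_mkQ_mkQ hne) hcc'
  · rintro ⟨c, hc⟩
    exact hψ a ha _ (hQ c) (haQ c) hc.symm
  · rintro ⟨c, hc⟩
    exact hψ b hb _ (hQ c) (hbQ c) hc.symm

theorem exists_three_coloring_of_selective
    (hψ : ∀ a ∈ X, ∀ b ∈ X, (compGraph n t k H).Adj a b → ψ a ≠ ψ b) (hk : 1 ≤ k)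
    (hsel : Selective n t k X) :
    ∃ j : Fin t, ∃ φ : Fin n → Fin 3, ∀ a b : Fin n, (H j).Adj a b → φ a ≠ φ b := by
  obtain ⟨⟨j, hj, -⟩, hA, hQ⟩ := selective_iff.1 hsel
  have hchoice : ∀ v u, ∃ i : Fin 4, ∀ h : v ≠ u, mkA n t k v u h i ∈ X := fun v u =>
    if h : v = u then ⟨0, fun h' => absurd h h'⟩ else (hA v u h).exists.imp fun _ hi _ => hi
  choose sel hselX using hchoice
  have hcolor : ∀ v u (h : v ≠ u), ψ (mkA n t k v u h (sel v u)) = ψ (mkY n t k j) := by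
    intro v u h
    obtain ⟨q, hq⟩ := exists_inCliqueIdx (sel v u)
    exact color_eq_of_forall_adj_mkQ hψ hk (hQ v q) (hselX v u h) hj
      (compGraph_adj_mkA_mkQ hq) (compGraph_adj_mkY_mkQ j v q)
  have hne3 : ∀ v u, (H j).Adj v u → sel v u ≠ 3 := fun v u hvu h3 =>
    hψ _ hj _ (hselX v u hvu.ne) (compGraph_adj_mkY_mkA hvu h3) (hcolor v u hvu.ne).symm
  refine ⟨j, (H j).exists_coloring_of_dart_labels (fun v u => Fin.ofNat 3 (sel v u)) ?_ ?_⟩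
  · intro v u u' hu hu'
    suffices sel v u = sel v u' by rw [this]
    by_contra hne
    exact hψ _ (hselX v u hu.ne) _ (hselX v u' hu'.ne)
      (compGraph_adj_mkA_mkA_of_ne hne (hne3 v u hu) (hne3 v u' hu'))
      ((hcolor v u hu.ne).trans (hcolor v u' hu'.ne).symm)
  · intro v u hvu hcast
    have hsame : sel v u = sel u v := by
      have h1 := Fin.val_ne_iff.2 (hne3 v u hvu)
      have h2 := Fin.val_ne_iff.2 (hne3 u v hvu.symm)
      simp only [Fin.ext_iff, Fin.val_ofNat] at hcast ⊢
      omega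
    refine hψ _ (hselX v u hvu.ne) _ (hselX u v hvu.ne') ?_
      ((hcolor v u hvu.ne).trans (hcolor u v hvu.ne').symm)
    rw [hsame]
    exact compGraph_adj_mkA_mkA_swap hvu.symm (hsame ▸ hne3 v u hvu)

end Forward

section Backward

def selectedIdx (G : SimpleGraph (Fin n)) (φ : Fin n → Fin 3) (v u : Fin n) : Fin 4 :=
  if G.Adj v u then (φ v).castSucc else Fin.last 3

def selectedSet (G : SimpleGraph (Fin n)) (φ : Fin n → Fin 3) (j : Fin t) :
    Set (CompV n t k) :=
  {x | match x with
    | Sum.inl (Sum.inl (⟨(v, u), _⟩, i)) => i = selectedIdx G φ v u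
    | Sum.inl (Sum.inr _) => True
    | Sum.inr j' => j' = j}

def cliqueColoring (hk : 1 ≤ k) : CompV n t k → Fin k
  | Sum.inl (Sum.inr (_, _, c)) => ⟨c + 1, by omega⟩
  | _ => ⟨0, hk⟩

theorem selective_selectedSet (G : SimpleGraph (Fin n)) (φ : Fin n → Fin 3) (j : Fin t) :
    Selective n t k (selectedSet G φ j) :=
  selective_iff.2 ⟨⟨j, rfl, fun _ h => h⟩, fun _ _ _ => ⟨_, rfl, fun _ h => h⟩,
    fun _ _ _ => trivial⟩

theorem selectedIdx_ne_three_iff {G : SimpleGraph (Fin n)} {φ : Fin n → Fin 3} {v u : Fin n} :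
    selectedIdx G φ v u ≠ 3 ↔ G.Adj v u := by
  unfold selectedIdx
  split_ifs with h
  · exact iff_of_true (Fin.castSucc_ne_last _) h
  · exact iff_of_false (fun h3 => h3 rfl) h

theorem selectedIdx_of_adj {G : SimpleGraph (Fin n)} {φ : Fin n → Fin 3} {v u : Fin n}
    (h : G.Adj v u) : selectedIdx G φ v u = (φ v).castSucc := if_pos h

theorem cliqueColoring_ne_of_baseRel (hk : 1 ≤ k) {j : Fin t} {φ : Fin n → Fin 3}
    (hφ : ∀ a b, (H j).Adj a b → φ a ≠ φ b) {a b : CompV n t k}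
    (ha : a ∈ selectedSet (H j) φ j) (hb : b ∈ selectedSet (H j) φ j) (hab : a ≠ b)
    (hrel : baseRel n t k H a b) : cliqueColoring hk a ≠ cliqueColoring hk b := by
  rcases a with (⟨⟨⟨v, u⟩, hvu⟩, i⟩ | ⟨v, q, c⟩) | j' <;>
    rcases b with (⟨⟨⟨v', u'⟩, hv'u'⟩, i'⟩ | ⟨v', q', c'⟩) | j'' <;>
    simp only [Set.mem_ofPred_eq, selectedSet, baseRel, cliqueColoring, ne_eq, Fin.mk.injEq,
      not_true_eq_false] at *
  · rcases hrel with ⟨rfl, hii', hi, hi'⟩ | ⟨rfl, hi, rfl, rfl, -⟩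
    · subst ha hb
      rw [selectedIdx_of_adj (selectedIdx_ne_three_iff.1 hi),
        selectedIdx_of_adj (selectedIdx_ne_three_iff.1 hi')] at hii'
      exact hii' rfl
    · have hadj := selectedIdx_ne_three_iff.1 (ha ▸ hi)
      rw [selectedIdx_of_adj hadj] at ha
      rw [selectedIdx_of_adj (selectedIdx_ne_three_iff.1 (hb ▸ hi))] at hb
      exact hφ _ _ hadj (Fin.castSucc_injective _ (ha.symm.trans hb))
  · omega
  · obtain ⟨rfl, rfl⟩ := hrel
    intro hcc'
    exact hab (by rw [Fin.ext (Nat.succ_injective hcc')])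
  · subst ha hb
    have := selectedIdx_ne_three_iff (G := H j') (φ := φ) (v := v') (u := u')
    tauto
  · omega

theorem exists_selective_coloring_of_three_coloring (hk : 1 ≤ k) {j : Fin t} {φ : Fin n → Fin 3}
    (hφ : ∀ a b, (H j).Adj a b → φ a ≠ φ b) :
    ∃ X : Set (CompV n t k), Selective n t k X ∧ ∃ ψ : CompV n t k → Fin k,
      ∀ a ∈ X, ∀ b ∈ X, (compGraph n t k H).Adj a b → ψ a ≠ ψ b := by
  refine ⟨selectedSet (H j) φ j, selective_selectedSet _ _ _, cliqueColoring hk,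
    fun a ha b hb hadj => ?_⟩
  obtain ⟨hab, hrel | hrel⟩ := (SimpleGraph.fromRel_adj _ _ _).1 hadj
  · exact cliqueColoring_ne_of_baseRel hk hφ ha hb hab hrel
  · exact (cliqueColoring_ne_of_baseRel hk hφ hb ha hab.symm hrel).symm

end Backward

end Construction

theorem comp_selective_iff_some_three_colorable_general
    (n t k : ℕ) (hk : 1 ≤ k)
    (H : Fin t → SimpleGraph (Fin n)) :
    (∃ X : Set (CompV n t k), Selective n t k X ∧
      ∃ ψ : CompV n t k → Fin k,
        ∀ a ∈ X, ∀ b ∈ X, (compGraph n t k H).Adj a b → ψ a ≠ ψ b) ↔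
    (∃ j : Fin t, ∃ φ : Fin n → Fin 3, ∀ a b : Fin n, (H j).Adj a b → φ a ≠ φ b) := by
  constructor
  · rintro ⟨X, hsel, ψ, hψ⟩
    exact exists_three_coloring_of_selective hψ hk hsel
  · rintro ⟨j, φ, hφ⟩
    exact exists_selective_coloring_of_three_coloring hk hφ

/-- Lemma 7 of the paper, correctness of the OR-cross-composition.
Let `G` and `𝒱` be produced by the composition construction from graphs `H_1, …, H_t`
on vertex set `[n]` and `k ≥ 1`.  Then there is a selective set `X ⊆ V(G)` whose induced
subgraph is properly `k`-colorable if and only if some `H_j` admits a proper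
`3`-coloring. -/
theorem comp_selective_iff_some_three_colorable
    (n t k : ℕ) (hn : 2 ≤ n) (ht : 1 ≤ t) (hk : 1 ≤ k)
    (H : Fin t → SimpleGraph (Fin n)) :
    (∃ X : Set (CompV n t k), Selective n t k X ∧
      ∃ ψ : CompV n t k → Fin k,
        ∀ a ∈ X, ∀ b ∈ X, (compGraph n t k H).Adj a b → ψ a ≠ ψ b) ↔
    (∃ j : Fin t, ∃ φ : Fin n → Fin 3, ∀ a b : Fin n, (H j).Adj a b → φ a ≠ φ b) :=
  comp_selective_iff_some_three_colorable_general n t k hk H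

end
end
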